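/- Let L, S, D : [0,∞) → [0,∞) be monotone admissible functions (L non-increasing with L(x) → 0 as x → ∞, S non-decreasing with S(x) → 0 as x → 0, D non-increasing with D(x) → 0 as x → ∞). Define F(x,t,x',t') = (|t−t'|+|x−x'|)^ε / |t−x|^ε · L(|t−x|)·S(|t−x|)·D(|x+t|) on tuples with 2(|t−t'|+|x−x'|) < |t−x|, for some 0 < ε. Then F is bounded and: (a) F → 0 as |t−x| → ∞; (b) F → 0 as |t−t'|+|x−x'| → 0; (c) F → 0 as |x+t|/(1+|t−x|) → ∞. Consequently, a compact Calderón–Zygmund kernel with parameter δ satisfies, for any 0 < δ' < δ, a bound |K(t,x) − K(t',x')| ≤ C·(|t−t'|+|x−x'|)^{δ'}/|t−x|^{1+δ'}·L₁(|t−x|)·S₁(|t−t'|+|x−x'|)·D₁(1 + |t+x|/(1+|t−x|)) whenever 2(|t−t'|+|x−x'|) < |t−x|, where L₁, S₁, D₁ are admissible. -/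

import Mathlib

open Filter

/-- A set of admissible functions: bounded, nonnegative, with the limits
`L(x) → 0` as `x → ∞`, `S(x) → 0` as `x → 0`, `D(x) → 0` as `x → ∞`. -/
def Admissible (L S D : ℝ → ℝ) : Prop :=
  (∀ x, 0 ≤ L x) ∧ (∀ x, 0 ≤ S x) ∧ (∀ x, 0 ≤ D x) ∧
  (∃ B : ℝ, ∀ x, L x ≤ B ∧ S x ≤ B ∧ D x ≤ B) ∧
  Tendsto L atTop (nhds 0) ∧
  Tendsto S (nhdsWithin 0 (Set.Ioi 0)) (nhds 0) ∧
  Tendsto D atTop (nhds 0)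

/-- The auxiliary function
`F(x,t,x',t') = ((|t−t'|+|x−x'|)^ε/|t−x|^ε) L(|t−x|) S(|t−x|) D(|x+t|)`. -/
noncomputable def Fker (L S D : ℝ → ℝ) (ε t x t' x' : ℝ) : ℝ :=
  ((|t - t'| + |x - x'|) ^ ε / |t - x| ^ ε) * (L |t - x| * S |t - x| * D |x + t|)

open Topology

/-!
On the region `2(|t−t'|+|x−x'|) < |t−x|` the quotient `(|t−t'|+|x−x'|)^ε / |t−x|^ε` lies in
`[0, 1]`, so with `M` a common bound of `L, S, D` the function `F` is at most `M²` times any one of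
`L(|t−x|)`, `S(|t−x|)`, `D(|x+t|)`, and at most `M³` times the quotient. Each limit follows from
one of these bounds; for `|t−t'|+|x−x'| → 0` one distinguishes whether `|t−x|` is small
(then `S(|t−x|)` is small) or not (then the quotient is small).

For the kernel, with `d = |t−t'|+|x−x'|` and `r = |t−x|`, the gap `θ = δ − δ'` is spent as the
factor `(d/r)^θ`. It is at most `1`, and at most `(√d)^θ` when `√d ≤ r`; hence by monotonicity of
`S`, `(d/r)^θ S(r) ≤ M min(1, (√d)^θ) + S(√d) =: S₁(d)`, while `D(|t+x|) ≤ D(|t+x|/(1+|t−x|))`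
by monotonicity of `D`.
-/

lemma Admissible.exists_pos_bound {L S D : ℝ → ℝ} (h : Admissible L S D) :
    ∃ M > 0, ∀ u, L u ≤ M ∧ S u ≤ M ∧ D u ≤ M := by
  obtain ⟨-, -, -, ⟨B, hB⟩, -⟩ := h
  refine ⟨max B 1, lt_max_of_lt_right one_pos, fun u => ?_⟩
  obtain ⟨hL, hS, hD⟩ := hB u
  exact ⟨hL.trans (le_max_left _ _), hS.trans (le_max_left _ _), hD.trans (le_max_left _ _)⟩

section Fker

variable {L S D : ℝ → ℝ} {ε t x t' x' : ℝ}

lemma rpow_div_rpow_le_one_of_region (hε : 0 ≤ ε)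
    (h : 2 * (|t - t'| + |x - x'|) < |t - x|) :
    (|t - t'| + |x - x'|) ^ ε / |t - x| ^ ε ≤ 1 := by
  have hd : 0 ≤ |t - t'| + |x - x'| := by positivity
  exact div_le_one_of_le₀ (Real.rpow_le_rpow hd (by linarith) hε) (by positivity)

lemma Fker_le_mul (hadm : Admissible L S D) {q l s d : ℝ}
    (hq : (|t - t'| + |x - x'|) ^ ε / |t - x| ^ ε ≤ q) (hl : L |t - x| ≤ l)
    (hs : S |t - x| ≤ s) (hd : D |x + t| ≤ d) :
    Fker L S D ε t x t' x' ≤ q * (l * s * d) := by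
  obtain ⟨hL, hS, hD, -⟩ := hadm
  have hq0 : 0 ≤ (|t - t'| + |x - x'|) ^ ε / |t - x| ^ ε := by positivity
  have hl0 : 0 ≤ l := (hL _).trans hl
  have hs0 : 0 ≤ s := (hS _).trans hs
  exact mul_le_mul hq (mul_le_mul (mul_le_mul hl hs (hS _) hl0) hd (hD _) (mul_nonneg hl0 hs0))
    (mul_nonneg (mul_nonneg (hL _) (hS _)) (hD _)) (hq0.trans hq)

theorem exists_Fker_bound (hadm : Admissible L S D) (hε : 0 ≤ ε) :
    ∃ Bd : ℝ, ∀ t x t' x' : ℝ, 2 * (|t - t'| + |x - x'|) < |t - x| →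
      Fker L S D ε t x t' x' ≤ Bd := by
  obtain ⟨M, -, hM⟩ := hadm.exists_pos_bound
  exact ⟨1 * (M * M * M), fun t x t' x' h =>
    Fker_le_mul hadm (rpow_div_rpow_le_one_of_region hε h) (hM _).1 (hM _).2.1 (hM _).2.2⟩

theorem exists_Fker_le_of_far_from_diagonal (hadm : Admissible L S D) (hε : 0 ≤ ε) :
    ∀ η > 0, ∃ R : ℝ, ∀ t x t' x' : ℝ, 2 * (|t - t'| + |x - x'|) < |t - x| →
      R ≤ |t - x| → Fker L S D ε t x t' x' ≤ η := by
  intro η hη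
  obtain ⟨M, -, hM⟩ := hadm.exists_pos_bound
  have hlim : Tendsto (fun u => 1 * (L u * M * M)) atTop (𝓝 0) := by
    simpa using (hadm.2.2.2.2.1.mul_const M).mul_const M
  obtain ⟨R, hR⟩ := eventually_atTop.1 (hlim.eventually (gt_mem_nhds hη))
  refine ⟨R, fun t x t' x' h hr => (Fker_le_mul hadm (rpow_div_rpow_le_one_of_region hε h)
    le_rfl (hM _).2.1 (hM _).2.2).trans (hR _ hr).le⟩

theorem exists_Fker_le_of_small_displacement (hadm : Admissible L S D) (hε : 0 < ε) :
    ∀ η > 0, ∃ ρ > 0, ∀ t x t' x' : ℝ, 2 * (|t - t'| + |x - x'|) < |t - x| →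
      |t - t'| + |x - x'| ≤ ρ → Fker L S D ε t x t' x' ≤ η := by
  intro η hη
  obtain ⟨M, hM0, hM⟩ := hadm.exists_pos_bound
  have hlim : Tendsto (fun u => 1 * (M * S u * M)) (𝓝[>] 0) (𝓝 0) := by
    simpa using (hadm.2.2.2.2.2.1.const_mul M).mul_const M
  obtain ⟨ρ₀, hρ₀, hS⟩ :=
    mem_nhdsGT_iff_exists_Ioo_subset.1 (hlim.eventually (gt_mem_nhds hη))
  set c := (η / (M * M * M)) ^ ε⁻¹
  have hc : 0 < c := by positivity
  have hcε : c ^ ε * (M * M * M) = η := by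
    rw [Real.rpow_inv_rpow (by positivity) hε.ne']
    field_simp
  refine ⟨ρ₀ * c, mul_pos hρ₀ hc, fun t x t' x' h hdρ => ?_⟩
  have hd : 0 ≤ |t - t'| + |x - x'| := by positivity
  have hr : 0 < |t - x| := by linarith
  rcases lt_or_ge |t - x| ρ₀ with hnear | hfar
  · exact (Fker_le_mul hadm (rpow_div_rpow_le_one_of_region hε.le h) (hM _).1 le_rfl
      (hM _).2.2).trans (hS ⟨hr, hnear⟩).le
  · have hq : (|t - t'| + |x - x'|) ^ ε / |t - x| ^ ε ≤ c ^ ε := by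
      rw [← Real.div_rpow hd hr.le]
      gcongr
      rw [div_le_iff₀ hr]
      nlinarith
    calc Fker L S D ε t x t' x' ≤ c ^ ε * (M * M * M) :=
          Fker_le_mul hadm hq (hM _).1 (hM _).2.1 (hM _).2.2
      _ = η := hcε

theorem exists_Fker_le_of_far_along_diagonal (hadm : Admissible L S D) (hε : 0 ≤ ε) :
    ∀ η > 0, ∃ R : ℝ, ∀ t x t' x' : ℝ, 2 * (|t - t'| + |x - x'|) < |t - x| →
      R ≤ |x + t| / (1 + |t - x|) → Fker L S D ε t x t' x' ≤ η := by
  intro η hη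
  obtain ⟨M, -, hM⟩ := hadm.exists_pos_bound
  have hlim : Tendsto (fun u => 1 * (M * M * D u)) atTop (𝓝 0) := by
    simpa using hadm.2.2.2.2.2.2.const_mul (M * M)
  obtain ⟨R, hR⟩ := eventually_atTop.1 (hlim.eventually (gt_mem_nhds hη))
  refine ⟨R, fun t x t' x' h hs => (Fker_le_mul hadm (rpow_div_rpow_le_one_of_region hε h)
    (hM _).1 (hM _).2.1 le_rfl).trans (hR _ ?_).le⟩
  exact hs.trans (div_le_self (abs_nonneg _) (le_add_of_nonneg_right (abs_nonneg _)))

end Fker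

section Kernel

variable {L S D : ℝ → ℝ} {M θ : ℝ}

noncomputable def refineS (S : ℝ → ℝ) (M θ v : ℝ) : ℝ :=
  M * min 1 (√|v| ^ θ) + S √|v|

lemma tendsto_refineS (hS : Tendsto S (𝓝[>] 0) (𝓝 0)) (hθ : 0 < θ) :
    Tendsto (refineS S M θ) (𝓝[>] 0) (𝓝 0) := by
  have hsqrt : Tendsto (fun v : ℝ => √|v|) (𝓝[>] 0) (𝓝[>] 0) := by
    refine tendsto_nhdsWithin_iff.2 ⟨?_, ?_⟩
    · exact ((Real.continuous_sqrt.comp continuous_abs).tendsto' 0 0 (by simp)).mono_left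
        nhdsWithin_le_nhds
    · filter_upwards [self_mem_nhdsWithin] with v hv
      exact Real.sqrt_pos.2 (abs_pos.2 (ne_of_gt hv))
  have hpow : Tendsto (fun u : ℝ => M * min 1 (u ^ θ)) (𝓝[>] 0) (𝓝 0) := by
    have hc : Continuous fun u : ℝ => M * min 1 (u ^ θ) :=
      continuous_const.mul (continuous_const.min (Real.continuous_rpow_const hθ.le))
    simpa [Real.zero_rpow hθ.ne'] using (hc.tendsto 0).mono_left nhdsWithin_le_nhds
  have := (hpow.add hS).comp hsqrt
  rwa [add_zero] at this

lemma Admissible.refine (h : Admissible L S D) (hB : ∀ u, L u ≤ M ∧ S u ≤ M ∧ D u ≤ M)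
    (hθ : 0 < θ) : Admissible L (refineS S M θ) (fun w => D (w - 1)) := by
  obtain ⟨hL0, hS0, hD0, -, hL, hS, hD⟩ := h
  have hM : 0 ≤ M := (hS0 0).trans (hB 0).2.1
  refine ⟨hL0, fun v => by unfold refineS; have := hS0 √|v|; positivity, fun w => hD0 _,
    ⟨2 * M, fun u => ⟨by linarith [(hB u).1], ?_, by linarith [(hB (u - 1)).2.2]⟩⟩, hL,
    tendsto_refineS hS hθ, hD.comp (tendsto_atTop_add_const_right _ (-1) tendsto_id)⟩
  rw [refineS]
  have : M * min 1 (√|u| ^ θ) ≤ M * 1 := mul_le_mul_of_nonneg_left (min_le_left _ _) hM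
  linarith [(hB √|u|).2.1]

lemma rpow_div_mul_le_refineS (hSmono : Monotone S) (hS0 : ∀ u, 0 ≤ S u)
    (hSM : ∀ u, S u ≤ M) (hθ : 0 ≤ θ) {d r : ℝ} (hd : 0 ≤ d) (hdr : d ≤ r) :
    (d / r) ^ θ * S r ≤ refineS S M θ d := by
  have hr : 0 ≤ r := hd.trans hdr
  have hM : 0 ≤ M := (hS0 0).trans (hSM 0)
  have hq1 : (d / r) ^ θ ≤ 1 := Real.rpow_le_one (by positivity) (div_le_one_of_le₀ hdr hr) hθ
  rw [refineS, abs_of_nonneg hd]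
  rcases le_total r √d with hsmall | hlarge
  · calc (d / r) ^ θ * S r ≤ 1 * S √d := mul_le_mul hq1 (hSmono hsmall) (hS0 _) zero_le_one
      _ ≤ _ := by rw [one_mul]; exact le_add_of_nonneg_left (by positivity)
  · have hdiv : d / r ≤ √d := div_le_of_le_mul₀ hr (Real.sqrt_nonneg d) <| by
      calc d = √d * √d := (Real.mul_self_sqrt hd).symm
        _ ≤ √d * r := mul_le_mul_of_nonneg_left hlarge (Real.sqrt_nonneg d)
    have hq : (d / r) ^ θ ≤ √d ^ θ := Real.rpow_le_rpow (by positivity) hdiv hθ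
    calc (d / r) ^ θ * S r ≤ min 1 (√d ^ θ) * M :=
          mul_le_mul (le_min hq1 hq) (hSM r) (hS0 r) (by positivity)
      _ ≤ _ := by rw [mul_comm]; exact le_add_of_nonneg_right (hS0 _)

lemma weight_le_refined (hL0 : ∀ u, 0 ≤ L u) (hS0 : ∀ u, 0 ≤ S u) (hD0 : ∀ u, 0 ≤ D u)
    (hSM : ∀ u, S u ≤ M) (hSmono : Monotone S) (hDanti : Antitone D) {δ δ' d r z : ℝ}
    (hδ' : 0 < δ') (hδ'δ : δ' < δ) (hd : 0 ≤ d) (hdr : d ≤ r) (hz : 0 ≤ z) :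
    d ^ δ / r ^ (1 + δ) * (L r * S r * D z) ≤
      d ^ δ' / r ^ (1 + δ') * (L r * refineS S M (δ - δ') d * D (1 + z / (1 + r) - 1)) := by
  have hr : 0 ≤ r := hd.trans hdr
  have hsplit : d ^ δ / r ^ (1 + δ) = d ^ δ' / r ^ (1 + δ') * (d / r) ^ (δ - δ') := by
    have hdδ : d ^ δ = d ^ δ' * d ^ (δ - δ') := by
      rw [← Real.rpow_add' hd (by linarith)]; ring_nf
    have hrδ : r ^ (1 + δ) = r ^ (1 + δ') * r ^ (δ - δ') := by
      rw [← Real.rpow_add' hr (by linarith)]; ring_nf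
    rw [hdδ, hrδ, Real.div_rpow hd hr]
    ring
  have := hL0 r
  have := hD0 z
  calc d ^ δ / r ^ (1 + δ) * (L r * S r * D z)
      = d ^ δ' / r ^ (1 + δ') * (L r * ((d / r) ^ (δ - δ') * S r) * D z) := by
        rw [hsplit]; ring
    _ ≤ _ := by
        have hS₁ := rpow_div_mul_le_refineS hSmono hS0 hSM
          (by linarith : 0 ≤ δ - δ') hd hdr
        have hD₁ : D z ≤ D (1 + z / (1 + r) - 1) := by
          rw [add_sub_cancel_left]
          exact hDanti (div_le_self hz (by linarith))
        have : 0 ≤ refineS S M (δ - δ') d := by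
          have := hS0 r
          exact (by positivity : 0 ≤ (d / r) ^ (δ - δ') * S r).trans hS₁
        gcongr

theorem exists_refined_kernel_bound (hadm : Admissible L S D) (hSmono : Monotone S)
    (hDanti : Antitone D) (K : ℝ → ℝ → ℂ) {C δ δ' : ℝ} (hC : 0 < C) (hδ' : 0 < δ')
    (hδ'δ : δ' < δ)
    (hK : ∀ t x t' x' : ℝ, 2 * (|t - t'| + |x - x'|) < |t - x| →
      ‖K t x - K t' x'‖ ≤
        C * ((|t - t'| + |x - x'|) ^ δ / |t - x| ^ (1 + δ)) *
          (L |t - x| * S |t - x| * D |t + x|)) :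
    ∃ L₁ S₁ D₁ : ℝ → ℝ, Admissible L₁ S₁ D₁ ∧ ∃ C₁ > 0,
      ∀ t x t' x' : ℝ, 2 * (|t - t'| + |x - x'|) < |t - x| →
        ‖K t x - K t' x'‖ ≤
          C₁ * ((|t - t'| + |x - x'|) ^ δ' / |t - x| ^ (1 + δ')) *
            (L₁ |t - x| * S₁ (|t - t'| + |x - x'|) *
              D₁ (1 + |t + x| / (1 + |t - x|))) := by
  obtain ⟨M, -, hM⟩ := hadm.exists_pos_bound
  refine ⟨L, refineS S M (δ - δ'), fun w => D (w - 1), hadm.refine hM (sub_pos.2 hδ'δ), C, hC,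
    fun t x t' x' h => (hK t x t' x' h).trans ?_⟩
  have hd : 0 ≤ |t - t'| + |x - x'| := by positivity
  rw [mul_assoc C, mul_assoc C]
  exact mul_le_mul_of_nonneg_left (weight_le_refined hadm.1 hadm.2.1 hadm.2.2.1
    (fun u => (hM u).2.1) hSmono hDanti hδ' hδ'δ hd (by linarith) (abs_nonneg _)) hC.le

end Kernel

theorem statement16 (L S D : ℝ → ℝ) (hadm : Admissible L S D)
    (hSmono : ∀ x y : ℝ, x ≤ y → S x ≤ S y)
    (hDmono : ∀ x y : ℝ, x ≤ y → D y ≤ D x)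
    (ε : ℝ) (hε : 0 < ε) :
    ((∃ Bd : ℝ, ∀ t x t' x' : ℝ, 2 * (|t - t'| + |x - x'|) < |t - x| →
        Fker L S D ε t x t' x' ≤ Bd) ∧
      (∀ η > 0, ∃ R : ℝ, ∀ t x t' x' : ℝ, 2 * (|t - t'| + |x - x'|) < |t - x| →
        R ≤ |t - x| → Fker L S D ε t x t' x' ≤ η) ∧
      (∀ η > 0, ∃ ρ > 0, ∀ t x t' x' : ℝ, 2 * (|t - t'| + |x - x'|) < |t - x| →
        |t - t'| + |x - x'| ≤ ρ → Fker L S D ε t x t' x' ≤ η) ∧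
      (∀ η > 0, ∃ R : ℝ, ∀ t x t' x' : ℝ, 2 * (|t - t'| + |x - x'|) < |t - x| →
        R ≤ |x + t| / (1 + |t - x|) → Fker L S D ε t x t' x' ≤ η)) ∧
    (∀ (K : ℝ → ℝ → ℂ) (C δ : ℝ), 0 < C → 0 < δ → δ ≤ 1 →
      (∀ t x t' x' : ℝ, 2 * (|t - t'| + |x - x'|) < |t - x| →
        ‖K t x - K t' x'‖ ≤
          C * ((|t - t'| + |x - x'|) ^ δ / |t - x| ^ (1 + δ)) *
            (L |t - x| * S |t - x| * D |t + x|)) →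
      ∀ δ' : ℝ, 0 < δ' → δ' < δ →
        ∃ L₁ S₁ D₁ : ℝ → ℝ, Admissible L₁ S₁ D₁ ∧ ∃ C₁ > 0,
          ∀ t x t' x' : ℝ, 2 * (|t - t'| + |x - x'|) < |t - x| →
            ‖K t x - K t' x'‖ ≤
              C₁ * ((|t - t'| + |x - x'|) ^ δ' / |t - x| ^ (1 + δ')) *
                (L₁ |t - x| * S₁ (|t - t'| + |x - x'|) *
                  D₁ (1 + |t + x| / (1 + |t - x|)))) :=
  ⟨⟨exists_Fker_bound hadm hε.le, exists_Fker_le_of_far_from_diagonal hadm hε.le,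
      exists_Fker_le_of_small_displacement hadm hε,
      exists_Fker_le_of_far_along_diagonal hadm hε.le⟩,
    fun K _ _ hC _ _ hK _ hδ' hδ'δ =>
      exists_refined_kernel_bound hadm hSmono hDmono K hC hδ' hδ'δ hK⟩
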